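/- arXiv:2106.14147 — 2 statements merged into one kernel-verified Lean document; each statement's English description precedes it below -/
import Mathlib

section
/- Let f be an automorphism of the free group F_n that induces the identity on the abelianization F_n^{ab}. Then: (i) for every x ∈ F_n, the element f(x)·x⁻¹ lies in the commutator subgroup C = [F_n, F_n]; and (ii) the map F_n → C/D sending x to the coset of f(x)·x⁻¹, where D = [F_n, [F_n, F_n]], is a group homomorphism. -/
abbrev FG (n : ℕ) := FreeGroup (Fin n)

/-- `D = [F_n, [F_n, F_n]]`, the subgroup generated by commutators of elements of `F_n`
with elements of the commutator subgroup. -/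
def DD (n : ℕ) : Subgroup (FG n) := ⁅(⊤ : Subgroup (FG n)), commutator (FG n)⁆

instance DD_normal (n : ℕ) : (DD n).Normal :=
  inferInstanceAs (Subgroup.Normal ⁅(⊤ : Subgroup (FG n)), commutator (FG n)⁆)

/-- The quotient group `C/D` where `C = [F_n, F_n]` and `D = [F_n, [F_n, F_n]]`. -/
abbrev CmodD (n : ℕ) : Type :=
  commutator (FG n) ⧸ (DD n).subgroupOf (commutator (FG n))

/-- The projection `C → C/D`. -/
def toCmodD (n : ℕ) (c : commutator (FG n)) : CmodD n := QuotientGroup.mk c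

/-!
Write `δ x = f x * x⁻¹`. Triviality on the abelianization puts `δ x` in `N = [G, G]`. For any
endomorphism `f`, `δ` is a crossed homomorphism, `δ (x * y) = δ x * (x * δ y * x⁻¹)`, and
conjugation acts trivially on `N` modulo `⁅⊤, N⁆`, so there `δ` becomes a homomorphism.
-/

theorem Abelianization.mul_inv_mem_commutator_of_of_eq {G : Type*} [Group G] {a b : G}
    (h : Abelianization.of a = Abelianization.of b) : a * b⁻¹ ∈ commutator G := by
  rw [← div_eq_mul_inv, ← QuotientGroup.eq_iff_div_mem]
  exact h

section Displacement

open scoped commutatorElement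

variable {G F : Type*} [Group G] [FunLike F G G] [MonoidHomClass F G G]

theorem map_mul_mul_inv_inv_mul_eq_commutatorElement (f : F) (x y : G) :
    (f (x * y) * (x * y)⁻¹)⁻¹ * (f x * x⁻¹ * (f y * y⁻¹)) = ⁅x, (f y * y⁻¹)⁻¹⁆ := by
  rw [commutatorElement_def, map_mul]
  group

def displacementHom (f : F) (N : Subgroup G) [N.Normal] (hN : ∀ x, f x * x⁻¹ ∈ N) :
    G →* N ⧸ (⁅(⊤ : Subgroup G), N⁆ : Subgroup G).subgroupOf N where
  toFun x := QuotientGroup.mk ⟨f x * x⁻¹, hN x⟩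
  map_one' := by simp only [map_one, inv_one, mul_one]; rfl
  map_mul' x y := by
    rw [← QuotientGroup.mk_mul, QuotientGroup.eq, Subgroup.mem_subgroupOf]
    change (f (x * y) * (x * y)⁻¹)⁻¹ * (f x * x⁻¹ * (f y * y⁻¹)) ∈ ⁅(⊤ : Subgroup G), N⁆
    rw [map_mul_mul_inv_inv_mul_eq_commutatorElement]
    exact Subgroup.commutator_mem_commutator (Subgroup.mem_top x) (N.inv_mem (hN y))

end Displacement

/-- Let `f` be an automorphism of the free group `F_n` inducing the identity on the
abelianization. Then (i) `f(x)·x⁻¹` lies in the commutator subgroup `C = [F_n, F_n]`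
for every `x`, and (ii) the map `F_n → C/D`, `x ↦ f(x)·x⁻¹ mod D`, where
`D = [F_n, [F_n, F_n]]`, is a group homomorphism. -/
theorem johnson_hom_welldef_and_hom (n : ℕ) (f : MulAut (FG n))
    (hf : ∀ x : FG n, Abelianization.of (f x) = Abelianization.of x) :
    ∃ hC : ∀ x : FG n, f x * x⁻¹ ∈ commutator (FG n),
      ∀ x y : FG n,
        toCmodD n ⟨f (x * y) * (x * y)⁻¹, hC (x * y)⟩ =
          toCmodD n ⟨f x * x⁻¹, hC x⟩ * toCmodD n ⟨f y * y⁻¹, hC y⟩ := by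
  have hC x := Abelianization.mul_inv_mem_commutator_of_of_eq (hf x)
  exact ⟨hC, map_mul (displacementHom f (commutator (FG n)) hC)⟩
end

section
/- For every n ≥ 1, the quotient group [F_n, F_n]/[F_n, [F_n, F_n]] is abelian and is free abelian of rank n(n−1)/2, with free abelian basis the cosets of the commutators [x_i, x_j] for 1 ≤ i < j ≤ n. In particular, [F_n, F_n]/[F_n, [F_n, F_n]] ≅ ℤ^{n(n−1)/2} ≅ Λ²ℤⁿ. -/
open scoped commutatorElement in
/-- The coset of the commutator `[x_i, x_j]` in `[F_n, F_n]/[F_n, [F_n, F_n]]`,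
for a pair of indices `i < j`. -/
def basisElt (n : ℕ) (p : {q : Fin n × Fin n // q.1 < q.2}) : CmodD n :=
  QuotientGroup.mk
    ⟨⁅FreeGroup.of p.1.1, FreeGroup.of p.1.2⁆,
      Subgroup.commutator_mem_commutator (Subgroup.mem_top _) (Subgroup.mem_top _)⟩

/-!
The commutator pairing `(g, h) ↦ [g, h]` is bimultiplicative modulo `[G, [G, G]]`, so
`[G, G]/[G, [G, G]]` is abelian and, for `G = F_n`, generated by the classes of `[x_i, x_j]` with
`i < j` (because `[x_i, x_i] = 1` and `[x_j, x_i] = [x_i, x_j]⁻¹`). Independence comes from a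
Heisenberg-type central extension: for a bimultiplicative `β : V × V → A` on an abelian group `V`,
the group `V × A` with `(v, a)(w, b) = (vw, ab β(v, w))` has `A` central, and a homomorphism `f`
from `G` into it kills `[G, [G, G]]` and sends `[g, h]` to `β(v, w)/β(w, v) ∈ A`, where `v, w` are
the `V`-components of `f g, f h`. With `V = F_n^ab`, `f x_i = (x_i, 1)` and `β(x_i, x_j) = a_{ij}`
for `i < j`, `1` otherwise, the class of `[x_i, x_j]` goes to an arbitrary prescribed `a_{ij}`;
taking `A = ℤ^{pairs}` gives coordinates showing that these classes form a `ℤ`-basis.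
-/

open scoped commutatorElement

theorem commutatorElement_mem_commutator {G : Type*} [Group G] (g h : G) :
    ⁅g, h⁆ ∈ commutator G :=
  Subgroup.commutator_mem_commutator (Subgroup.mem_top g) (Subgroup.mem_top h)

theorem conj_mem_commutator {G : Type*} [Group G] (g : G) {c : G} (hc : c ∈ commutator G) :
    g * c * g⁻¹ ∈ commutator G :=
  Subgroup.Normal.conj_mem inferInstance c hc g

/-- `CmodD n` is definitionally `CommutatorQuotient (FG n)`. -/
abbrev CommutatorQuotient (G : Type*) [Group G] :=
  commutator G ⧸ (⁅(⊤ : Subgroup G), commutator G⁆).subgroupOf (commutator G)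

namespace CommutatorQuotient

variable {G : Type*} [Group G]

instance : CommGroup (CommutatorQuotient G) where
  mul_comm := by
    refine ((Subgroup.Normal.quotient_commutative_iff_commutator_le).mpr ?_).is_comm.comm
    rw [commutator_eq_closure (commutator G), Subgroup.closure_le]
    rintro _ ⟨c, d, rfl⟩
    exact Subgroup.commutator_mem_commutator (Subgroup.mem_top _) d.2

def commutatorClass (g h : G) : CommutatorQuotient G :=
  QuotientGroup.mk ⟨⁅g, h⁆, commutatorElement_mem_commutator g h⟩

theorem mk_conj (g : G) {c : G} (hc : c ∈ commutator G) :
    (QuotientGroup.mk ⟨g * c * g⁻¹, conj_mem_commutator g hc⟩ : CommutatorQuotient G) =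
      QuotientGroup.mk ⟨c, hc⟩ := by
  rw [QuotientGroup.eq, Subgroup.mem_subgroupOf]
  convert Subgroup.commutator_mem_commutator (Subgroup.mem_top g) (inv_mem hc) using 1
  simp [commutatorElement_def, mul_assoc]

theorem commutatorClass_mul_left (g g' h : G) :
    commutatorClass (g * g') h = commutatorClass g h * commutatorClass g' h := by
  have hsplit : (⟨⁅g * g', h⁆, commutatorElement_mem_commutator _ _⟩ : commutator G) =
      ⟨g * ⁅g', h⁆ * g⁻¹, conj_mem_commutator g (commutatorElement_mem_commutator _ _)⟩ *
        ⟨⁅g, h⁆, commutatorElement_mem_commutator _ _⟩ :=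
    Subtype.ext (by simp only [Subgroup.coe_mul, commutatorElement_def]; group)
  rw [commutatorClass, hsplit, QuotientGroup.mk_mul, mk_conj, mul_comm]
  rfl

theorem commutatorClass_mul_right (g h h' : G) :
    commutatorClass g (h * h') = commutatorClass g h * commutatorClass g h' := by
  have hsplit : (⟨⁅g, h * h'⁆, commutatorElement_mem_commutator _ _⟩ : commutator G) =
      ⟨⁅g, h⁆, commutatorElement_mem_commutator _ _⟩ *
        ⟨h * ⁅g, h'⁆ * h⁻¹,
          conj_mem_commutator h (commutatorElement_mem_commutator _ _)⟩ :=
    Subtype.ext (by simp only [Subgroup.coe_mul, commutatorElement_def]; group)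
  rw [commutatorClass, hsplit, QuotientGroup.mk_mul, mk_conj]
  rfl

theorem commutatorClass_self (g : G) : commutatorClass g g = 1 := by
  simp only [commutatorClass, commutatorElement_self]
  rfl

theorem commutatorClass_swap (g h : G) : commutatorClass h g = (commutatorClass g h)⁻¹ := by
  rw [commutatorClass, commutatorClass, ← QuotientGroup.mk_inv]
  congr 1
  exact Subtype.ext (commutatorElement_inv g h).symm

def commutatorPairing : G →* G →* CommutatorQuotient G :=
  MonoidHom.mk' (fun g => MonoidHom.mk' (commutatorClass g) (commutatorClass_mul_right g))
    fun g g' => MonoidHom.ext (commutatorClass_mul_left g g')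

theorem closure_range_commutatorClass :
    Subgroup.closure (Set.range fun p : G × G => commutatorClass p.1 p.2) = ⊤ := by
  set H := Subgroup.closure (Set.range fun p : G × G => commutatorClass p.1 p.2)
  have hgen : commutator G ≤ (H.comap (QuotientGroup.mk' _)).map (commutator G).subtype := by
    refine (commutator_eq_closure G).le.trans (Subgroup.closure_le _ |>.mpr ?_)
    rintro _ ⟨a, b, rfl⟩
    exact ⟨⟨⁅a, b⁆, commutatorElement_mem_commutator a b⟩,
      Subgroup.subset_closure ⟨(a, b), rfl⟩, rfl⟩
  refine (Subgroup.eq_top_iff' _).mpr fun x => ?_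
  obtain ⟨⟨c, hc⟩, rfl⟩ := QuotientGroup.mk_surjective x
  obtain ⟨c', hc', rfl⟩ := hgen hc
  exact hc'

theorem closure_image2_commutatorClass {s : Set G} (hs : Subgroup.closure s = ⊤) :
    Subgroup.closure (Set.image2 commutatorClass s s) = ⊤ := by
  set H := Subgroup.closure (Set.image2 commutatorClass s s)
  have hleft (a : G) (ha : a ∈ s) (h : G) : commutatorClass a h ∈ H := by
    have : s ⊆ H.comap (commutatorPairing a) := fun b hb =>
      Subgroup.subset_closure (Set.mem_image2_of_mem ha hb)
    exact (Subgroup.closure_le _ |>.mpr this) (hs ▸ Subgroup.mem_top h)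
  have hall (g h : G) : commutatorClass g h ∈ H := by
    have : s ⊆ H.comap (commutatorPairing.flip h) := fun a ha => hleft a ha h
    exact (Subgroup.closure_le _ |>.mpr this) (hs ▸ Subgroup.mem_top g)
  rw [eq_top_iff, ← closure_range_commutatorClass, Subgroup.closure_le]
  rintro _ ⟨⟨g, h⟩, rfl⟩
  exact hall g h

end CommutatorQuotient

open CommutatorQuotient

section FreeGroup

variable {α : Type*} [LinearOrder α]

variable (α) in
def commutatorBasis (p : {q : α × α // q.1 < q.2}) : CommutatorQuotient (FreeGroup α) :=
  commutatorClass (FreeGroup.of p.1.1) (FreeGroup.of p.1.2)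

theorem closure_range_commutatorBasis :
    Subgroup.closure (Set.range (commutatorBasis α)) = ⊤ := by
  rw [eq_top_iff, ← closure_image2_commutatorClass (FreeGroup.closure_range_of α),
    Subgroup.closure_le]
  rintro _ ⟨_, ⟨i, rfl⟩, _, ⟨j, rfl⟩, rfl⟩
  rcases lt_trichotomy i j with hij | rfl | hji
  · exact Subgroup.subset_closure ⟨⟨(i, j), hij⟩, rfl⟩
  · rw [commutatorClass_self]
    exact one_mem _
  · rw [commutatorClass_swap]
    exact inv_mem (Subgroup.subset_closure ⟨⟨(j, i), hji⟩, rfl⟩)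

theorem commutatorBasis_hom_ext {M : Type*} [Monoid M]
    {φ ψ : CommutatorQuotient (FreeGroup α) →* M}
    (h : ∀ p, φ (commutatorBasis α p) = ψ (commutatorBasis α p)) : φ = ψ :=
  MonoidHom.eq_of_eqOn_dense closure_range_commutatorBasis (Set.eqOn_range.mpr (funext h))

end FreeGroup

@[ext]
structure HeisenbergGroup {V A : Type*} [CommGroup V] [CommGroup A] (β : V →* V →* A) where
  base : V
  fiber : A

namespace HeisenbergGroup

variable {V A : Type*} [CommGroup V] [CommGroup A] {β : V →* V →* A}

instance : Mul (HeisenbergGroup β) :=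
  ⟨fun x y => ⟨x.base * y.base, x.fiber * y.fiber * β x.base y.base⟩⟩

instance : One (HeisenbergGroup β) := ⟨⟨1, 1⟩⟩

instance : Inv (HeisenbergGroup β) :=
  ⟨fun x => ⟨x.base⁻¹, x.fiber⁻¹ * β x.base x.base⟩⟩

@[simp] theorem base_mul (x y : HeisenbergGroup β) : (x * y).base = x.base * y.base := rfl
@[simp] theorem fiber_mul (x y : HeisenbergGroup β) :
    (x * y).fiber = x.fiber * y.fiber * β x.base y.base := rfl
@[simp] theorem base_one : (1 : HeisenbergGroup β).base = 1 := rfl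
@[simp] theorem fiber_one : (1 : HeisenbergGroup β).fiber = 1 := rfl
@[simp] theorem base_inv (x : HeisenbergGroup β) : x⁻¹.base = x.base⁻¹ := rfl
@[simp] theorem fiber_inv (x : HeisenbergGroup β) :
    x⁻¹.fiber = x.fiber⁻¹ * β x.base x.base := rfl

instance : Group (HeisenbergGroup β) :=
  Group.ofLeftAxioms
    (fun x y z => by ext <;> simp [mul_assoc, mul_left_comm, mul_comm])
    (fun x => by ext <;> simp)
    (fun x => by ext <;> simp [mul_comm])

def baseHom : HeisenbergGroup β →* V where
  toFun := base
  map_one' := rfl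
  map_mul' _ _ := rfl

def fiberHom : (baseHom : HeisenbergGroup β →* V).ker →* A where
  toFun z := z.1.fiber
  map_one' := rfl
  map_mul' z w := by
    have hz : z.1.base = 1 := z.2
    simp [hz]

theorem commute_of_base_eq_one {z : HeisenbergGroup β} (hz : z.base = 1)
    (x : HeisenbergGroup β) : Commute x z := by
  ext <;> simp [hz, mul_comm]

theorem fiber_commutatorElement (x y : HeisenbergGroup β) :
    (⁅x, y⁆).fiber = β x.base y.base / β y.base x.base := by
  simp only [commutatorElement_def, fiber_mul, base_mul, fiber_inv, base_inv, map_mul, map_inv,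
    MonoidHom.mul_apply, MonoidHom.inv_apply]
  apply Additive.ofMul.injective
  simp only [ofMul_mul, ofMul_inv, ofMul_div]
  abel

end HeisenbergGroup

namespace CommutatorQuotient

open HeisenbergGroup

variable {G V A : Type*} [Group G] [CommGroup V] [CommGroup A] {β : V →* V →* A}

theorem commutator_le_comap_ker_baseHom (f : G →* HeisenbergGroup β) :
    commutator G ≤ (baseHom.ker).comap f :=
  Abelianization.commutator_subset_ker (baseHom.comp f)

theorem commutator_top_commutator_le_ker (f : G →* HeisenbergGroup β) :
    ⁅(⊤ : Subgroup G), commutator G⁆ ≤ f.ker := by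
  rw [Subgroup.commutator_le]
  intro g _ c hc
  rw [MonoidHom.mem_ker, map_commutatorElement, commutatorElement_eq_one_iff_mul_comm]
  exact (commute_of_base_eq_one (commutator_le_comap_ker_baseHom f hc) (f g)).eq

def heisenbergLift (f : G →* HeisenbergGroup β) : CommutatorQuotient G →* A :=
  QuotientGroup.lift _
    (fiberHom.comp ((f.comp (commutator G).subtype).codRestrict _
      fun c => commutator_le_comap_ker_baseHom f c.2))
    fun c hc => by
      have hfc : f c = 1 := commutator_top_commutator_le_ker f (Subgroup.mem_subgroupOf.mp hc)
      exact MonoidHom.mem_ker.mpr (congrArg fiber hfc)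

theorem heisenbergLift_commutatorClass (f : G →* HeisenbergGroup β) (g h : G) :
    heisenbergLift f (commutatorClass g h) =
      β (f g).base (f h).base / β (f h).base (f g).base := by
  change (f ⁅g, h⁆).fiber = _
  rw [map_commutatorElement, fiber_commutatorElement]

end CommutatorQuotient

section UniversalProperty

variable {α A : Type*} [LinearOrder α] [CommGroup A]

def upperPairingForm (g : {q : α × α // q.1 < q.2} → A) :
    Abelianization (FreeGroup α) →* Abelianization (FreeGroup α) →* A :=
  Abelianization.lift <| FreeGroup.lift fun i =>
    Abelianization.lift <| FreeGroup.lift fun j => if h : i < j then g ⟨(i, j), h⟩ else 1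

theorem upperPairingForm_of_of (g : {q : α × α // q.1 < q.2} → A) (i j : α) :
    upperPairingForm g (.of (.of i)) (.of (.of j)) =
      if h : i < j then g ⟨(i, j), h⟩ else 1 := by
  simp [upperPairingForm]

def commutatorBasisLift (g : {q : α × α // q.1 < q.2} → A) :
    CommutatorQuotient (FreeGroup α) →* A :=
  heisenbergLift (FreeGroup.lift fun i =>
    (⟨.of (.of i), 1⟩ : HeisenbergGroup (upperPairingForm g)))

theorem commutatorBasisLift_commutatorBasis (g : {q : α × α // q.1 < q.2} → A)
    (p : {q : α × α // q.1 < q.2}) : commutatorBasisLift g (commutatorBasis α p) = g p := by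
  rw [commutatorBasisLift, commutatorBasis, heisenbergLift_commutatorClass]
  simp [upperPairingForm_of_of, p.2, not_lt_of_gt p.2]

end UniversalProperty

section Basis

variable {α : Type*} [LinearOrder α]

theorem linearIndependent_commutatorBasis :
    LinearIndependent ℤ (Additive.ofMul ∘ commutatorBasis α) := by
  let coord := commutatorBasisLift (α := α) fun p =>
    Multiplicative.ofAdd (Finsupp.single p (1 : ℤ))
  refine LinearIndependent.of_comp (MonoidHom.toAdditiveLeft coord).toIntLinearMap ?_
  convert Finsupp.linearIndependent_single_one ℤ {q : α × α // q.1 < q.2} using 1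
  · funext p
    exact congrArg Multiplicative.toAdd (commutatorBasisLift_commutatorBasis _ p)
  -- `Finsupp.module` versus `AddCommGroup.toIntModule` on `_ →₀ ℤ`
  · rfl
  · exact Subsingleton.elim _ _

theorem span_commutatorBasis :
    Submodule.span ℤ (Set.range (Additive.ofMul ∘ commutatorBasis α)) = ⊤ := by
  have h := congrArg Subgroup.toAddSubgroup (closure_range_commutatorBasis (α := α))
  rw [Subgroup.toAddSubgroup_closure, ← Submodule.span_int_eq_addSubgroupClosure] at h
  rw [Set.range_comp, Equiv.image_eq_preimage_symm]
  exact Submodule.toAddSubgroup_injective (h.trans rfl)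

variable (α) in
noncomputable def commutatorQuotientBasis :
    Module.Basis {q : α × α // q.1 < q.2} ℤ (Additive (CommutatorQuotient (FreeGroup α))) :=
  .mk linearIndependent_commutatorBasis span_commutatorBasis.ge

end Basis

theorem card_pairs_lt (α : Type*) [Fintype α] [LinearOrder α] :
    Fintype.card {q : α × α // q.1 < q.2} = Fintype.card α * (Fintype.card α - 1) / 2 := by
  rw [Fintype.card_subtype, Fintype.card_product_filter_lt, Nat.choose_two_right]

theorem commutator_quotient_free_abelian_general (n : ℕ) :
    (∀ a b : CmodD n, a * b = b * a) ∧
    (∀ (A : Type) [CommGroup A] (g : {q : Fin n × Fin n // q.1 < q.2} → A),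
        ∃! φ : CmodD n →* A, ∀ p, φ (basisElt n p) = g p) ∧
    Nonempty (CmodD n ≃* Multiplicative (Fin (n * (n - 1) / 2) → ℤ)) := by
  refine ⟨mul_comm (G := CommutatorQuotient (FG n)), fun A _ g => ?_, ?_⟩
  · refine ⟨commutatorBasisLift g, commutatorBasisLift_commutatorBasis g, fun φ hφ => ?_⟩
    exact commutatorBasis_hom_ext fun p =>
      (hφ p).trans (commutatorBasisLift_commutatorBasis g p).symm
  · let b := (commutatorQuotientBasis (Fin n)).reindex
      (Fintype.equivFinOfCardEq (by simpa using card_pairs_lt (Fin n)))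
    exact ⟨AddEquiv.toMultiplicativeRight b.equivFun.toAddEquiv⟩

/-- For every `n ≥ 1`, the quotient `[F_n, F_n]/[F_n, [F_n, F_n]]` is abelian and is
free abelian with basis the cosets of the commutators `[x_i, x_j]` for `i < j`
(expressed by the universal property of the free abelian group on this family);
in particular it is isomorphic to `ℤ^{n(n−1)/2}`. -/
theorem commutator_quotient_free_abelian (n : ℕ) (hn : 1 ≤ n) :
    (∀ a b : CmodD n, a * b = b * a) ∧
    (∀ (A : Type) [CommGroup A] (g : {q : Fin n × Fin n // q.1 < q.2} → A),
        ∃! φ : CmodD n →* A, ∀ p, φ (basisElt n p) = g p) ∧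
    Nonempty (CmodD n ≃* Multiplicative (Fin (n * (n - 1) / 2) → ℤ)) :=
  commutator_quotient_free_abelian_general n
end
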